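/- (Second Picard–Fuchs relation.) For every h > 0 one has I_2(h) = (4/15)·h·I'_0(h) + ((4/5)·h + 4/15)·I'_2(h). -/

import Mathlib

open Real Set Filter intervalIntegral

/-- Right endpoint of the exterior oval: `x_max(h) = √(1 + √(1+4h))`. -/
noncomputable def xmax (h : ℝ) : ℝ := Real.sqrt (1 + Real.sqrt (1 + 4*h))

/-- Complete elliptic integral `I_i(h) = ∫_{-x_max}^{x_max} x^i √(2h + x² - x⁴/2) dx`. -/
noncomputable def ellI (i : ℕ) (h : ℝ) : ℝ :=
  ∫ x in (-xmax h)..(xmax h), x^i * Real.sqrt (2*h + x^2 - x^4/2)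

/-- Complete elliptic integral `I'_i(h) = ∫_{-x_max}^{x_max} x^i (2h + x² - x⁴/2)^{-1/2} dx`. -/
noncomputable def ellI' (i : ℕ) (h : ℝ) : ℝ :=
  ∫ x in (-xmax h)..(xmax h), x^i / Real.sqrt (2*h + x^2 - x^4/2)

/-!
Write `Q = 2h + x² - x⁴/2`. The primitive `F = (x³/5 - 2x/15) √Q` satisfies
`F' = x² √Q - ((4/15) h + ((4/5) h + 4/15) x²) / √Q` on `(-x_max, x_max)`, and it vanishes at
`±x_max`, where `Q` does; integrating `F'` over `[-x_max, x_max]` gives the relation.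
The improper integrals converge because `Q = (1 - (x/x_max)²) w(x)` with `w` continuous and
positive, which reduces them to the integrability of `(1 - t²)^(-1/2)` on `[-1, 1]`.
-/

open MeasureTheory (volume)

theorem intervalIntegrable_inv_sqrt_one_sub_div_sq (a : ℝ) :
    IntervalIntegrable (fun x => (√(1 - (x / a) ^ 2))⁻¹) volume (-a) a := by
  have := Polynomial.Chebyshev.intervalIntegrable_sqrt_one_sub_sq_inv.comp_mul_left (c := a⁻¹)
  simpa [Real.sqrt_inv, div_eq_inv_mul] using this

theorem intervalIntegrable_div_sqrt_one_sub_div_sq_mul (a : ℝ) {f w : ℝ → ℝ}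
    (hf : Continuous f) (hw : Continuous w) (hw₀ : ∀ x, 0 < w x) :
    IntervalIntegrable (fun x => f x / √((1 - (x / a) ^ 2) * w x)) volume (-a) a := by
  have hfw : Continuous fun x => f x / √(w x) :=
    hf.div (continuous_sqrt.comp hw) fun x => (sqrt_pos.2 (hw₀ x)).ne'
  refine ((intervalIntegrable_inv_sqrt_one_sub_div_sq a).mul_continuousOn
    hfw.continuousOn).congr_ae ?_
  refine Eventually.of_forall fun x => ?_
  simp only [sqrt_mul' _ (hw₀ x).le]
  ring

/-- `y²` on the level set `H = h`, as a function of `x`. -/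
noncomputable def ySq (h x : ℝ) : ℝ := 2 * h + x ^ 2 - x ^ 4 / 2

theorem xmax_pos (h : ℝ) : 0 < xmax h :=
  sqrt_pos.2 (by positivity)

theorem sq_xmax (h : ℝ) : xmax h ^ 2 = 1 + √(1 + 4 * h) :=
  sq_sqrt (by positivity)

theorem ySq_eq_mul {h : ℝ} (hh : 0 ≤ 1 + 4 * h) (x : ℝ) :
    ySq h x = (1 - (x / xmax h) ^ 2) * (xmax h ^ 2 * (x ^ 2 + √(1 + 4 * h) - 1) / 2) := by
  have hs := sq_sqrt hh
  have ha := sq_xmax h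
  have := (xmax_pos h).ne'
  set s := √(1 + 4 * h)
  unfold ySq
  field_simp
  linear_combination (-(x ^ 2 + s - 1)) * ha - hs

theorem ySq_neg (h x : ℝ) : ySq h (-x) = ySq h x := by
  unfold ySq; ring

theorem ySq_xmax {h : ℝ} (hh : 0 ≤ 1 + 4 * h) : ySq h (xmax h) = 0 := by
  rw [ySq_eq_mul hh, div_self (xmax_pos h).ne']
  ring

theorem ySq_cofactor_pos {h : ℝ} (hh : 0 < h) (x : ℝ) :
    0 < xmax h ^ 2 * (x ^ 2 + √(1 + 4 * h) - 1) / 2 := by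
  have := xmax_pos h
  have : 1 < √(1 + 4 * h) := lt_sqrt_of_sq_lt (by linarith)
  have : 0 < x ^ 2 + √(1 + 4 * h) - 1 := by nlinarith
  positivity

theorem ySq_pos {h x : ℝ} (hh : 0 < h) (hx : x ∈ Ioo (-xmax h) (xmax h)) : 0 < ySq h x := by
  have hx₁ : (x / xmax h) ^ 2 < 1 := by
    rw [div_pow, div_lt_one (pow_pos (xmax_pos h) 2)]
    exact sq_lt_sq' hx.1 hx.2
  rw [ySq_eq_mul (by linarith)]
  exact mul_pos (by linarith) (ySq_cofactor_pos hh x)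

theorem intervalIntegrable_pow_div_sqrt_ySq {h : ℝ} (hh : 0 < h) (i : ℕ) :
    IntervalIntegrable (fun x => x ^ i / √(ySq h x)) volume (-xmax h) (xmax h) := by
  simp only [ySq_eq_mul (by linarith : 0 ≤ 1 + 4 * h)]
  exact intervalIntegrable_div_sqrt_one_sub_div_sq_mul _ (by fun_prop) (by fun_prop)
    (ySq_cofactor_pos hh)

theorem hasDerivAt_picardFuchs_two_primitive {h x : ℝ} (hh : 0 < h)
    (hx : x ∈ Ioo (-xmax h) (xmax h)) :
    HasDerivAt (fun y => (y ^ 3 / 5 - 2 * y / 15) * √(ySq h y))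
      (x ^ 2 * √(ySq h x) - 4 / 15 * h * (x ^ 0 / √(ySq h x))
        - (4 / 5 * h + 4 / 15) * (x ^ 2 / √(ySq h x))) x := by
  have hQ := ySq_pos hh hx
  have hQ' : HasDerivAt (ySq h) (2 * x - 2 * x ^ 3) x :=
    (((hasDerivAt_pow 2 x).const_add (2 * h)).sub ((hasDerivAt_pow 4 x).div_const 2)).congr_deriv
      (by norm_num; ring)
  have hpoly : HasDerivAt (fun y : ℝ => y ^ 3 / 5 - 2 * y / 15) (3 * x ^ 2 / 5 - 2 / 15) x :=
    (((hasDerivAt_pow 3 x).div_const 5).sub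
      (((hasDerivAt_id x).const_mul 2).div_const 15)).congr_deriv (by norm_num)
  refine (hpoly.mul (hQ'.sqrt hQ.ne')).congr_deriv ?_
  have hs := mul_self_sqrt hQ.le
  have := (sqrt_pos.2 hQ).ne'
  set s := √(ySq h x)
  unfold ySq at hs
  field_simp
  linear_combination (-(30 * x ^ 2 + 10)) * hs

/-- Second Picard-Fuchs relation. -/
theorem picard_fuchs_two (h : ℝ) (hh : 0 < h) :
    ellI 2 h = (4/15) * h * ellI' 0 h + ((4/5) * h + 4/15) * ellI' 2 h := by
  have hI := intervalIntegrable_pow_div_sqrt_ySq hh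
  have hI₂ : IntervalIntegrable (fun x => x ^ 2 * √(ySq h x)) volume (-xmax h) (xmax h) :=
    (by unfold ySq; fun_prop : Continuous _).intervalIntegrable _ _
  have hF : Continuous fun y => (y ^ 3 / 5 - 2 * y / 15) * √(ySq h y) := by
    unfold ySq; fun_prop
  have hFTC := integral_eq_sub_of_hasDerivAt_of_le (neg_le_self (xmax_pos h).le) hF.continuousOn
    (fun x hx => hasDerivAt_picardFuchs_two_primitive hh hx)
    ((hI₂.sub ((hI 0).const_mul _)).sub ((hI 2).const_mul _))
  rw [integral_sub (hI₂.sub ((hI 0).const_mul _)) ((hI 2).const_mul _),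
    integral_sub hI₂ ((hI 0).const_mul _), integral_const_mul, integral_const_mul,
    ySq_neg, ySq_xmax (by linarith)] at hFTC
  change ellI 2 h - _ * ellI' 0 h - _ * ellI' 2 h = _ at hFTC
  simp only [sqrt_zero, mul_zero, sub_zero] at hFTC
  linarith
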